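/- For any nonempty Z ⊆ X, φ ∈ C(X,ℝ) with M = ‖φ‖_∞, and 0 < θ < φ' ≤ 1, the upper θ-intermediate topological pressure satisfies P̄(f,Z,φ,θ) ≤ P̄(f,Z,φ,φ') ≤ (φ'/θ)·P̄(f,Z,φ,θ) + (φ'/θ − 1)·M, and the same chain of inequalities holds for the lower θ-intermediate pressure P̲. In particular, for φ = 0 one obtains h̄(f,Z,θ) ≤ h̄(f,Z,φ') ≤ (φ'/θ)·h̄(f,Z,θ) for the upper θ-intermediate topological entropy. -/

import Mathlib

open Filter Topology Set ENNReal NNReal MeasureTheory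

namespace NDSPressure

variable {X : Type*} [MetricSpace X]

/-- `traj f j = f_j ∘ ⋯ ∘ f_1` (with `traj f 0 = id`), the time-`j` map of the
nonautonomous system `f = {f_i}_{i ≥ 1}`. -/
def traj (f : ℕ → X → X) : ℕ → X → X
  | 0 => id
  | n + 1 => f (n + 1) ∘ traj f n

/-- The nonautonomous Birkhoff sum `S_n φ(x) = Σ_{j<n} φ(f_1^j x)`. -/
noncomputable def birkhoff (f : ℕ → X → X) (φ : X → ℝ) (n : ℕ) (x : X) : ℝ :=
  ∑ j ∈ Finset.range n, φ (traj f j x)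

/-- The Bowen ball `B_n(x, δ)` for the nonautonomous system `f`. -/
def bowenBall (f : ℕ → X → X) (n : ℕ) (δ : ℝ) (x : X) : Set X :=
  {y | ∀ j < n, dist (traj f j x) (traj f j y) < δ}

/-- The Bowen metric `d_n(x,y) = max_{0 ≤ j ≤ n-1} d(f_1^j x, f_1^j y)`. -/
noncomputable def dnDist (f : ℕ → X → X) (n : ℕ) (x y : X) : ℝ :=
  (((Finset.range n).sup fun j => nndist (traj f j x) (traj f j y) : ℝ≥0) : ℝ)

/-- Admissible string/ball lengths for the parameter `θ ∈ [0,1]`: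
`N ≤ n` and `n < N/θ + 1` (no upper restriction when `θ = 0`). -/
def admissible (θ : ℝ) (N n : ℕ) : Prop :=
  N ≤ n ∧ (n : ℝ) * θ < N + θ

/-- Weight `exp(-α n + sup_{B_n(x,δ)} S_n φ)` of a Bowen ball, as an extended nonnegative real. -/
noncomputable def ballWeight (f : ℕ → X → X) (φ : X → ℝ) (α δ : ℝ) (p : X × ℕ) : ℝ≥0∞ :=
  ENNReal.ofReal (Real.exp (-α * p.2 + sSup (birkhoff f φ p.2 '' bowenBall f p.2 δ p.1)))

/-- Weight `exp(-α n + S_n φ(x))` of a Bowen ball using the value at the center. -/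
noncomputable def ballWeightC (f : ℕ → X → X) (φ : X → ℝ) (α : ℝ) (p : X × ℕ) : ℝ≥0∞ :=
  ENNReal.ofReal (Real.exp (-α * p.2 + birkhoff f φ p.2 p.1))

/-- The Carathéodory–Pesin set function `M(Z, α, φ, δ, N, θ)` defined via covers of `Z`
by Bowen balls of admissible lengths. -/
noncomputable def MBall (f : ℕ → X → X) (Z : Set X) (α : ℝ) (φ : X → ℝ) (δ : ℝ)
    (N : ℕ) (θ : ℝ) : ℝ≥0∞ :=
  ⨅ (S : Set (X × ℕ)) (_ : S.Countable) (_ : ∀ p ∈ S, admissible θ N p.2)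
    (_ : Z ⊆ ⋃ p ∈ S, bowenBall f p.2 δ p.1),
      ∑' p : S, ballWeight f φ α δ (p : X × ℕ)

/-- Variant of `MBall` where Birkhoff sums are evaluated at the centers of the balls. -/
noncomputable def MBallC (f : ℕ → X → X) (Z : Set X) (α : ℝ) (φ : X → ℝ) (δ : ℝ)
    (N : ℕ) (θ : ℝ) : ℝ≥0∞ :=
  ⨅ (S : Set (X × ℕ)) (_ : S.Countable) (_ : ∀ p ∈ S, admissible θ N p.2)
    (_ : Z ⊆ ⋃ p ∈ S, bowenBall f p.2 δ p.1),
      ∑' p : S, ballWeightC f φ α (p : X × ℕ)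

noncomputable def mLowerBall (f : ℕ → X → X) (Z : Set X) (α : ℝ) (φ : X → ℝ)
    (δ θ : ℝ) : ℝ≥0∞ :=
  liminf (fun N => MBall f Z α φ δ N θ) atTop

noncomputable def mUpperBall (f : ℕ → X → X) (Z : Set X) (α : ℝ) (φ : X → ℝ)
    (δ θ : ℝ) : ℝ≥0∞ :=
  limsup (fun N => MBall f Z α φ δ N θ) atTop

/-- Lower θ-intermediate topological pressure of `φ` on `Z` at scale `δ`. -/
noncomputable def lowerPBall (f : ℕ → X → X) (Z : Set X) (φ : X → ℝ) (δ θ : ℝ) : ℝ :=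
  sInf {α : ℝ | mLowerBall f Z α φ δ θ = 0}

/-- Upper θ-intermediate topological pressure of `φ` on `Z` at scale `δ`. -/
noncomputable def upperPBall (f : ℕ → X → X) (Z : Set X) (φ : X → ℝ) (δ θ : ℝ) : ℝ :=
  sInf {α : ℝ | mUpperBall f Z α φ δ θ = 0}

/-- Center variants of the pressures at scale `δ`. -/
noncomputable def lowerPBallC (f : ℕ → X → X) (Z : Set X) (φ : X → ℝ) (δ θ : ℝ) : ℝ :=
  sInf {α : ℝ | liminf (fun N => MBallC f Z α φ δ N θ) atTop = 0}

noncomputable def upperPBallC (f : ℕ → X → X) (Z : Set X) (φ : X → ℝ) (δ θ : ℝ) : ℝ :=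
  sInf {α : ℝ | limsup (fun N => MBallC f Z α φ δ N θ) atTop = 0}

/-- The lower θ-intermediate topological pressure `P̲(f, Z, φ, θ) = lim_{δ→0} P̲(f,Z,φ,δ,θ)`
(the limit exists; we take the `limsup` along `δ → 0⁺`, which equals it). -/
noncomputable def lowerP (f : ℕ → X → X) (Z : Set X) (φ : X → ℝ) (θ : ℝ) : ℝ :=
  limsup (fun δ => lowerPBall f Z φ δ θ) (𝓝[>] (0 : ℝ))

/-- The upper θ-intermediate topological pressure `P̄(f, Z, φ, θ)`. -/
noncomputable def upperP (f : ℕ → X → X) (Z : Set X) (φ : X → ℝ) (θ : ℝ) : ℝ :=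
  limsup (fun δ => upperPBall f Z φ δ θ) (𝓝[>] (0 : ℝ))

/-! ### String (open cover) version -/

/-- For a string `L = (U_0, …, U_{m-1})` of sets, the set
`X(L) = {x : f_1^j x ∈ U_j for all j < m}`. -/
def stringSet (f : ℕ → X → X) (L : List (Set X)) : Set X :=
  {x | ∀ j < L.length, traj f j x ∈ L.getD j ∅}

/-- Weight of a string. -/
noncomputable def strWeight (f : ℕ → X → X) (φ : X → ℝ) (α : ℝ) (L : List (Set X)) : ℝ≥0∞ :=
  ENNReal.ofReal (Real.exp (-α * L.length + sSup (birkhoff f φ L.length '' stringSet f L)))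

/-- The Carathéodory–Pesin set function defined via covers of `Z` by string sets coming
from the cover `𝒰`, with admissible string lengths. -/
noncomputable def MStr (f : ℕ → X → X) (Z : Set X) (α : ℝ) (φ : X → ℝ)
    (𝒰 : Finset (Set X)) (N : ℕ) (θ : ℝ) : ℝ≥0∞ :=
  ⨅ (G : Set (List (Set X))) (_ : G.Countable)
    (_ : ∀ L ∈ G, (∀ U ∈ L, U ∈ 𝒰) ∧ admissible θ N L.length)
    (_ : Z ⊆ ⋃ L ∈ G, stringSet f L),
      ∑' L : G, strWeight f φ α (L : List (Set X))

/-- Lower θ-intermediate pressure relative to the open cover `𝒰`. -/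
noncomputable def lowerPStr (f : ℕ → X → X) (Z : Set X) (φ : X → ℝ)
    (𝒰 : Finset (Set X)) (θ : ℝ) : ℝ :=
  sInf {α : ℝ | liminf (fun N => MStr f Z α φ 𝒰 N θ) atTop = 0}

/-- Upper θ-intermediate pressure relative to the open cover `𝒰`. -/
noncomputable def upperPStr (f : ℕ → X → X) (Z : Set X) (φ : X → ℝ)
    (𝒰 : Finset (Set X)) (θ : ℝ) : ℝ :=
  sInf {α : ℝ | limsup (fun N => MStr f Z α φ 𝒰 N θ) atTop = 0}

/-- `𝒰` is a finite open cover of `X`. -/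
def IsFinOpenCover (𝒰 : Finset (Set X)) : Prop :=
  (∀ U ∈ 𝒰, IsOpen U) ∧ ⋃₀ (𝒰 : Set (Set X)) = Set.univ

/-- The mesh `|𝒰|` of a cover: the maximal diameter of its elements. -/
noncomputable def coverDiam (𝒰 : Finset (Set X)) : ℝ :=
  sSup (Metric.diam '' (𝒰 : Set (Set X)))

/-- The filter of finite open covers of vanishing mesh (`|𝒰| → 0`). -/
noncomputable def coverFilter (X : Type*) [MetricSpace X] :
    Filter {𝒰 : Finset (Set X) // IsFinOpenCover 𝒰} :=
  Filter.comap (fun 𝒰 => coverDiam 𝒰.1) (𝓝 (0 : ℝ))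

/-- The open-cover definition of the lower θ-intermediate pressure:
`lim_{|𝒰|→0} P̲(f,Z,φ,𝒰,θ)` (as a `limsup` along the cover filter). -/
noncomputable def lowerPStrFull (f : ℕ → X → X) (Z : Set X) (φ : X → ℝ) (θ : ℝ) : ℝ :=
  limsup (fun 𝒰 : {𝒰 : Finset (Set X) // IsFinOpenCover 𝒰} => lowerPStr f Z φ 𝒰.1 θ)
    (coverFilter X)

/-- The open-cover definition of the upper θ-intermediate pressure. -/
noncomputable def upperPStrFull (f : ℕ → X → X) (Z : Set X) (φ : X → ℝ) (θ : ℝ) : ℝ :=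
  limsup (fun 𝒰 : {𝒰 : Finset (Set X) // IsFinOpenCover 𝒰} => upperPStr f Z φ 𝒰.1 θ)
    (coverFilter X)

/-! ### Measure-theoretic version -/

/-- `M_μ(f, α, φ, ε, N, θ)`: infimum over finite μ-covers by Bowen balls of admissible
lengths of the total weight. -/
noncomputable def MMeas [MeasurableSpace X] (f : ℕ → X → X) (μ : Measure X) (α : ℝ)
    (φ : X → ℝ) (ε : ℝ) (N : ℕ) (θ : ℝ) : ℝ≥0∞ :=
  ⨅ (S : Finset (X × ℕ)) (_ : ∀ p ∈ S, admissible θ N p.2)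
    (_ : μ (⋃ p ∈ S, bowenBall f p.2 ε p.1) = 1),
      ∑ p ∈ S, ballWeight f φ α ε p

noncomputable def lowerPMeasEps [MeasurableSpace X] (f : ℕ → X → X) (μ : Measure X)
    (φ : X → ℝ) (ε θ : ℝ) : ℝ :=
  sInf {α : ℝ | liminf (fun N => MMeas f μ α φ ε N θ) atTop = 0}

noncomputable def upperPMeasEps [MeasurableSpace X] (f : ℕ → X → X) (μ : Measure X)
    (φ : X → ℝ) (ε θ : ℝ) : ℝ :=
  sInf {α : ℝ | limsup (fun N => MMeas f μ α φ ε N θ) atTop = 0}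

/-- The lower θ-intermediate measure-theoretic pressure `P̲_μ(f, φ, θ)`. -/
noncomputable def lowerPMeas [MeasurableSpace X] (f : ℕ → X → X) (μ : Measure X)
    (φ : X → ℝ) (θ : ℝ) : ℝ :=
  limsup (fun ε => lowerPMeasEps f μ φ ε θ) (𝓝[>] (0 : ℝ))

/-- The upper θ-intermediate measure-theoretic pressure `P̄_μ(f, φ, θ)`. -/
noncomputable def upperPMeas [MeasurableSpace X] (f : ℕ → X → X) (μ : Measure X)
    (φ : X → ℝ) (θ : ℝ) : ℝ :=
  limsup (fun ε => upperPMeasEps f μ φ ε θ) (𝓝[>] (0 : ℝ))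

/-! ### Power system -/

/-- `compFrom f k n = f_{k+n} ∘ ⋯ ∘ f_{k+1}`. -/
def compFrom (f : ℕ → X → X) (k : ℕ) : ℕ → X → X
  | 0 => id
  | n + 1 => f (k + n + 1) ∘ compFrom f k n

/-- The `m`-th power system `f^m = {f_{(i-1)m+1}^{im}}_{i ≥ 1}`. -/
def powerSeq (f : ℕ → X → X) (m : ℕ) : ℕ → X → X :=
  fun i => compFrom f ((i - 1) * m) m

/-! Enlarging the parameter from `θ` to `φ'` only shrinks the family of admissible covers, which
gives the first inequality at every scale `δ`. Conversely, a ball `B_n(x, δ)` of a `θ`-admissible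
cover at level `N` can be cut down to length `m = min n ⌈N / φ'⌉`, which is `φ'`-admissible and
satisfies `n ≤ 1 + (φ'/θ) m`. Cutting the ball loses at most `(n - m)‖φ‖` of the Birkhoff sum, and
replacing the supremum over `B_m(x, δ)` by the value at `x` costs at most `m ε` when `φ` oscillates
by at most `ε` on `δ`-balls. Together these show that the weight at the exponent
`(φ'/θ)(α + ‖φ‖) - ‖φ‖ + ε` is at most `e^{α + ‖φ‖}` times the weight at `α`, so the critical
exponents satisfy `P_δ(φ') ≤ (φ'/θ)(P_δ(θ) + ‖φ‖) - ‖φ‖ + ε`. Uniform continuity of `φ` lets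
`ε → 0` as `δ → 0`. -/

lemma abs_sum_range_le {u : ℕ → ℝ} {n : ℕ} {M : ℝ} (hu : ∀ j < n, |u j| ≤ M) :
    |∑ j ∈ Finset.range n, u j| ≤ n * M :=
  calc |∑ j ∈ Finset.range n, u j| ≤ ∑ j ∈ Finset.range n, |u j| := Finset.abs_sum_le_sum_abs _ _
    _ ≤ n * M := by
      simpa using Finset.sum_le_card_nsmul _ _ M fun j hj => hu j (Finset.mem_range.1 hj)

section BirkhoffSum

variable {Y : Type*} {f : ℕ → Y → Y} {ψ : Y → ℝ} {M : ℝ}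

lemma abs_birkhoff_le (hM : ∀ y, |ψ y| ≤ M) (n : ℕ) (y : Y) : |birkhoff f ψ n y| ≤ n * M :=
  abs_sum_range_le fun _ _ => hM _

lemma birkhoff_le_birkhoff_add (hM : ∀ y, |ψ y| ≤ M) {m n : ℕ} (hmn : m ≤ n) (y : Y) :
    birkhoff f ψ m y ≤ birkhoff f ψ n y + (n - m) * M := by
  obtain ⟨k, rfl⟩ := Nat.exists_eq_add_of_le hmn
  have htail := abs_sum_range_le (n := k) fun j _ => hM (traj f (m + j) y)
  rw [birkhoff, birkhoff, Finset.sum_range_add]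
  push_cast
  linarith [neg_abs_le (∑ j ∈ Finset.range k, ψ (traj f (m + j) y))]

lemma bddAbove_birkhoff_image (hM : ∀ y, |ψ y| ≤ M) (n : ℕ) (s : Set Y) :
    BddAbove (birkhoff f ψ n '' s) :=
  ⟨n * M, by rintro _ ⟨y, -, rfl⟩; exact (le_abs_self _).trans (abs_birkhoff_le hM n y)⟩

end BirkhoffSum

section Birkhoff

variable {f : ℕ → X → X} {ψ : X → ℝ} {M δ ε : ℝ}

lemma mem_bowenBall_self (hδ : 0 < δ) (n : ℕ) (x : X) : x ∈ bowenBall f n δ x :=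
  fun _ _ => by simpa using hδ

lemma bowenBall_subset_of_le {m n : ℕ} (hmn : m ≤ n) (x : X) :
    bowenBall f n δ x ⊆ bowenBall f m δ x :=
  fun _ hy j hj => hy j (hj.trans_le hmn)

lemma birkhoff_sub_le_of_mem_bowenBall (hε : ∀ a b, dist a b < δ → |ψ a - ψ b| ≤ ε)
    {n : ℕ} {x y : X} (hy : y ∈ bowenBall f n δ x) :
    birkhoff f ψ n y - birkhoff f ψ n x ≤ n * ε := by
  rw [birkhoff, birkhoff, ← Finset.sum_sub_distrib]
  refine (le_abs_self _).trans (abs_sum_range_le fun j hj => ?_)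
  rw [abs_sub_comm]
  exact hε _ _ (hy j hj)

lemma birkhoff_le_sSup_bowenBall (hM : ∀ x, |ψ x| ≤ M) (hδ : 0 < δ) (n : ℕ) (x : X) :
    birkhoff f ψ n x ≤ sSup (birkhoff f ψ n '' bowenBall f n δ x) :=
  le_csSup (bddAbove_birkhoff_image hM n _) (mem_image_of_mem _ (mem_bowenBall_self hδ n x))

lemma sSup_bowenBall_le (hδ : 0 < δ) (hε : ∀ a b, dist a b < δ → |ψ a - ψ b| ≤ ε)
    (n : ℕ) (x : X) :
    sSup (birkhoff f ψ n '' bowenBall f n δ x) ≤ birkhoff f ψ n x + n * ε := by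
  refine csSup_le ⟨_, mem_image_of_mem _ (mem_bowenBall_self hδ n x)⟩ ?_
  rintro _ ⟨y, hy, rfl⟩
  linarith [birkhoff_sub_le_of_mem_bowenBall hε hy]

end Birkhoff

section BallWeight

variable {f : ℕ → X → X} {ψ : X → ℝ} {M α δ ε : ℝ}

lemma one_le_ballWeight (hM : ∀ x, |ψ x| ≤ M) (hδ : 0 < δ) (hα : α ≤ -M) (p : X × ℕ) :
    1 ≤ ballWeight f ψ α δ p := by
  rw [ballWeight, ← ENNReal.ofReal_one]
  refine ENNReal.ofReal_le_ofReal (Real.one_le_exp ?_)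
  have hsup := birkhoff_le_sSup_bowenBall (f := f) hM hδ p.2 p.1
  have hlow := neg_abs_le (birkhoff f ψ p.2 p.1)
  have habs := abs_birkhoff_le (f := f) hM p.2 p.1
  nlinarith [mul_nonneg (Nat.cast_nonneg (α := ℝ) p.2) (by linarith : 0 ≤ -α - M)]

lemma ballWeight_le_exp_mul_ballWeight (hM : ∀ x, |ψ x| ≤ M) (hδ : 0 < δ)
    (hε : ∀ a b, dist a b < δ → |ψ a - ψ b| ≤ ε) (hα : -M ≤ α) {c : ℝ} {m n : ℕ}
    (hmn : m ≤ n) (hn : (n : ℝ) ≤ 1 + m * c) (x : X) :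
    ballWeight f ψ (c * (α + M) - M + ε) δ (x, m)
      ≤ ENNReal.ofReal (Real.exp (α + M)) * ballWeight f ψ α δ (x, n) := by
  rw [ballWeight, ballWeight, ← ENNReal.ofReal_mul (Real.exp_nonneg _), ← Real.exp_add]
  refine ENNReal.ofReal_le_ofReal (Real.exp_le_exp.2 ?_)
  have hsup_m := sSup_bowenBall_le (f := f) hδ hε m x
  have hcut := birkhoff_le_birkhoff_add (f := f) hM hmn x
  have hsup_n := birkhoff_le_sSup_bowenBall (f := f) hM hδ n x
  -- after the three estimates above, the two exponents differ by `(α + M) (1 + m c - n)`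
  have hlen : 0 ≤ (α + M) * (1 + m * c - n) := mul_nonneg (by linarith) (by linarith)
  dsimp only
  linarith

end BallWeight

lemma admissible_of_le {θ θ' : ℝ} (hθ : 0 < θ) (hθθ' : θ ≤ θ') {N n : ℕ}
    (h : admissible θ' N n) : admissible θ N n := by
  refine ⟨h.1, ?_⟩
  rcases Nat.eq_zero_or_pos n with rfl | hn
  · simpa using add_pos_of_nonneg_of_pos (Nat.cast_nonneg N) hθ
  · have hn1 : (1 : ℝ) ≤ n := by exact_mod_cast hn
    nlinarith [h.2]

section Truncation

variable {θ φ' : ℝ} {N n : ℕ}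

lemma admissible_min_ceil (hθ : 0 < θ) (hθφ : θ ≤ φ') (hφ1 : φ' ≤ 1)
    (hn : admissible θ N n) : admissible φ' N (min n ⌈N / φ'⌉₊) := by
  have hφ : 0 < φ' := hθ.trans_le hθφ
  have hN : (N : ℝ) ≤ N / φ' := le_div_self (Nat.cast_nonneg N) hφ hφ1
  refine ⟨le_min hn.1 (Nat.cast_le.1 (hN.trans (Nat.le_ceil _))), ?_⟩
  have hceil : (⌈N / φ'⌉₊ : ℝ) < N / φ' + 1 := Nat.ceil_lt_add_one (by positivity)
  have hmin : ((min n ⌈N / φ'⌉₊ : ℕ) : ℝ) ≤ ⌈N / φ'⌉₊ := by exact_mod_cast min_le_right _ _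
  calc ((min n ⌈N / φ'⌉₊ : ℕ) : ℝ) * φ' < (N / φ' + 1) * φ' := by gcongr; exact hmin.trans_lt hceil
    _ = N + φ' := by field_simp

lemma le_one_add_min_ceil_mul (hθ : 0 < θ) (hθφ : θ ≤ φ') (hn : admissible θ N n) :
    (n : ℝ) ≤ 1 + (min n ⌈N / φ'⌉₊ : ℕ) * (φ' / θ) := by
  have hφ : 0 < φ' := hθ.trans_le hθφ
  have hc : 1 ≤ φ' / θ := (one_le_div hθ).2 hθφ
  rcases le_total n ⌈N / φ'⌉₊ with h | h
  · rw [min_eq_left h]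
    nlinarith [Nat.cast_nonneg (α := ℝ) n]
  · rw [min_eq_right h]
    have hn' : (n : ℝ) < N / θ + 1 := by
      rw [div_add_one hθ.ne', lt_div_iff₀ hθ]; exact hn.2
    calc (n : ℝ) ≤ N / θ + 1 := hn'.le
      _ = N / φ' * (φ' / θ) + 1 := by field_simp
      _ ≤ ⌈N / φ'⌉₊ * (φ' / θ) + 1 := by gcongr; exact Nat.le_ceil _
      _ = 1 + ⌈N / φ'⌉₊ * (φ' / θ) := add_comm _ _

end Truncation

section MBall

variable {f : ℕ → X → X} {Z : Set X} {ψ : X → ℝ} {M α δ ε θ φ' : ℝ} {N : ℕ}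

lemma MBall_le_MBall_of_le (hθ : 0 < θ) (hθφ : θ ≤ φ') :
    MBall f Z α ψ δ N θ ≤ MBall f Z α ψ δ N φ' :=
  iInf_mono fun _ => iInf_mono fun _ => iInf_mono' fun hadm =>
    ⟨fun p hp => admissible_of_le hθ hθφ (hadm p hp), le_rfl⟩

lemma one_le_MBall (hM : ∀ x, |ψ x| ≤ M) (hδ : 0 < δ) (hZ : Z.Nonempty) (hα : α ≤ -M) :
    1 ≤ MBall f Z α ψ δ N θ := by
  obtain ⟨z, hz⟩ := hZ
  refine le_iInf fun S => le_iInf fun _ => le_iInf fun _ => le_iInf fun hcov => ?_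
  obtain ⟨p, hpS, -⟩ := mem_iUnion₂.1 (hcov hz)
  exact (one_le_ballWeight hM hδ hα p).trans (ENNReal.le_tsum (⟨p, hpS⟩ : S))

lemma MBall_le_mul_MBall_of_map {β θ' : ℝ} {K : ℝ≥0∞} (hK0 : K ≠ 0) (hK : K ≠ ∞)
    (T : X × ℕ → X × ℕ) (hT_adm : ∀ p : X × ℕ, admissible θ N p.2 → admissible θ' N (T p).2)
    (hT_ball : ∀ p : X × ℕ, admissible θ N p.2 →
      bowenBall f p.2 δ p.1 ⊆ bowenBall f (T p).2 δ (T p).1)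
    (hT_weight : ∀ p : X × ℕ, admissible θ N p.2 →
      ballWeight f ψ β δ (T p) ≤ K * ballWeight f ψ α δ p) :
    MBall f Z β ψ δ N θ' ≤ K * MBall f Z α ψ δ N θ := by
  simp only [MBall, ENNReal.mul_iInf_of_ne hK0 hK]
  refine le_iInf fun S => le_iInf fun hS => le_iInf fun hadm => le_iInf fun hcov => ?_
  refine iInf_le_of_le (T '' S) <| iInf_le_of_le (hS.image T) <| iInf_le_of_le ?_ <|
    iInf_le_of_le ?_ ?_
  · rintro _ ⟨p, hp, rfl⟩
    exact hT_adm p (hadm p hp)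
  · intro z hz
    obtain ⟨p, hp, hzp⟩ := mem_iUnion₂.1 (hcov hz)
    exact mem_iUnion₂.2 ⟨T p, mem_image_of_mem T hp, hT_ball p (hadm p hp) hzp⟩
  · calc ∑' q : T '' S, ballWeight f ψ β δ q
        ≤ ∑' p : S, ballWeight f ψ β δ (T p) :=
          ENNReal.tsum_le_tsum_comp_of_surjective imageFactorization_surjective _
      _ ≤ ∑' p : S, K * ballWeight f ψ α δ p :=
          ENNReal.tsum_le_tsum fun p => hT_weight p (hadm p p.2)
      _ = K * ∑' p : S, ballWeight f ψ α δ p := ENNReal.tsum_mul_left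

lemma MBall_le_exp_mul_MBall (hM : ∀ x, |ψ x| ≤ M) (hδ : 0 < δ)
    (hε : ∀ a b, dist a b < δ → |ψ a - ψ b| ≤ ε) (hθ : 0 < θ) (hθφ : θ ≤ φ') (hφ1 : φ' ≤ 1)
    (hα : -M ≤ α) :
    MBall f Z ((φ' / θ) * (α + M) - M + ε) ψ δ N φ'
      ≤ ENNReal.ofReal (Real.exp (α + M)) * MBall f Z α ψ δ N θ :=
  MBall_le_mul_MBall_of_map (by simpa using Real.exp_pos _) ENNReal.ofReal_ne_top
    (fun p => (p.1, min p.2 ⌈N / φ'⌉₊))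
    (fun _ hp => admissible_min_ceil hθ hθφ hφ1 hp)
    (fun p _ => bowenBall_subset_of_le (min_le_left _ _) p.1)
    (fun p hp => ballWeight_le_exp_mul_ballWeight hM hδ hε hα (min_le_left _ _)
      (le_one_add_min_ceil_mul hθ hθφ hp) p.1)

end MBall

lemma sInf_chain_of_affine_mapsTo {A B : Set ℝ} {M c ε : ℝ} (hM : 0 ≤ M) (hc : 1 ≤ c)
    (hε : 0 ≤ ε) (hBA : B ⊆ A) (hA : ∀ α ∈ A, -M ≤ α)
    (hAB : ∀ α ∈ A, c * (α + M) - M + ε ∈ B) :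
    -M ≤ sInf A ∧ sInf A ≤ sInf B ∧ sInf B ≤ c * (sInf A + M) - M + ε := by
  rcases A.eq_empty_or_nonempty with rfl | hAne
  · rw [subset_empty_iff.1 hBA, Real.sInf_empty]
    exact ⟨by linarith, le_rfl, by nlinarith⟩
  set F : ℝ → ℝ := fun α => c * (α + M) - M + ε
  have hF_mono : Monotone F := fun a b hab => by
    simp only [F]
    gcongr
  have hA_bdd : BddBelow A := ⟨-M, hA⟩
  have hB_bdd : BddBelow B := ⟨-M, fun α hα => hA α (hBA hα)⟩
  refine ⟨le_csInf hAne hA, csInf_le_csInf hA_bdd ⟨_, hAB _ hAne.some_mem⟩ hBA, ?_⟩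
  calc sInf B ≤ sInf (F '' A) :=
        csInf_le_csInf hB_bdd (hAne.image F) (image_subset_iff.2 hAB)
    _ = F (sInf A) :=
        (hF_mono.map_csInf_of_continuousAt (by fun_prop) hAne hA_bdd).symm

lemma limsup_chain_of_eventually {ι : Type*} {l : Filter ι} [l.NeBot] {h g : ι → ℝ} {M c : ℝ}
    (hM : 0 ≤ M) (hc : 1 ≤ c) (hh : ∀ᶠ i in l, -M ≤ h i) (hhg : ∀ᶠ i in l, h i ≤ g i)
    (hgh : ∀ ε > 0, ∀ᶠ i in l, g i ≤ c * (h i + M) - M + ε) :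
    limsup h l ≤ limsup g l ∧ limsup g l ≤ c * limsup h l + (c - 1) * M := by
  by_cases hh_bdd : IsBoundedUnder (· ≤ ·) l h
  swap
  · have hg_unbdd : ¬ IsBoundedUnder (· ≤ ·) l g := fun hg => hh_bdd (hg.mono_le hhg)
    rw [Real.limsup_of_not_isBoundedUnder hh_bdd, Real.limsup_of_not_isBoundedUnder hg_unbdd]
    exact ⟨le_rfl, by nlinarith⟩
  obtain ⟨b, hb⟩ := hh_bdd.eventually_le
  have hg_bdd : IsBoundedUnder (· ≤ ·) l g := isBoundedUnder_of_eventually_le <| by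
    filter_upwards [hb, hgh 1 one_pos] with i hbi hgi
    calc g i ≤ c * (h i + M) - M + 1 := hgi
      _ ≤ c * (b + M) - M + 1 := by gcongr
  have hg_cobdd : IsCoboundedUnder (· ≤ ·) l g := isCoboundedUnder_le_of_eventually_le l <| by
    filter_upwards [hh, hhg] with i hhi hgi using hhi.trans hgi
  refine ⟨limsup_le_limsup hhg (isCoboundedUnder_le_of_eventually_le l hh) hg_bdd, ?_⟩
  refine le_of_forall_pos_le_add fun η hη => ?_
  have hε : 0 < η / (c + 1) := by positivity
  refine limsup_le_of_le hg_cobdd ?_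
  filter_upwards [eventually_lt_of_limsup_lt (lt_add_of_pos_right _ hε) hh_bdd,
    hgh _ hε] with i hhi hgi
  calc g i ≤ c * (h i + M) - M + η / (c + 1) := hgi
    _ ≤ c * (limsup h l + η / (c + 1) + M) - M + η / (c + 1) := by gcongr
    _ = c * limsup h l + (c - 1) * M + η := by field_simp; ring

lemma eventually_abs_sub_le_of_dist_lt [CompactSpace X] {ψ : X → ℝ} (hψ : Continuous ψ)
    {ε : ℝ} (hε : 0 < ε) :
    ∀ᶠ δ in 𝓝[>] (0 : ℝ), ∀ a b, dist a b < δ → |ψ a - ψ b| ≤ ε := by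
  obtain ⟨δ₀, hδ₀, H⟩ := Metric.uniformContinuous_iff.1
    (CompactSpace.uniformContinuous_of_continuous hψ) ε hε
  filter_upwards [Ioo_mem_nhdsGT hδ₀] with δ hδ a b hab
  exact (H (hab.trans hδ.2)).le

/-- `lowerPBall` and `upperPBall` are the cases `L = liminf` and `L = limsup` along `atTop`. -/
noncomputable def critExp (L : (ℕ → ℝ≥0∞) → ℝ≥0∞) (f : ℕ → X → X) (Z : Set X) (ψ : X → ℝ)
    (δ θ : ℝ) : ℝ :=
  sInf {α : ℝ | L (fun N => MBall f Z α ψ δ N θ) = 0}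

section CritExp

variable {L : (ℕ → ℝ≥0∞) → ℝ≥0∞} {f : ℕ → X → X} {Z : Set X} {ψ : X → ℝ} {M θ φ' : ℝ}

lemma critExp_chain (hL_mono : Monotone L) (hL_one : L (fun _ => 1) ≠ 0)
    (hL_mul : ∀ K ≠ ∞, ∀ u, L (fun n => K * u n) = K * L u)
    (hZ : Z.Nonempty) (hM : ∀ x, |ψ x| ≤ M) {δ ε : ℝ} (hδ : 0 < δ)
    (hε : ∀ a b, dist a b < δ → |ψ a - ψ b| ≤ ε) (hε0 : 0 ≤ ε)
    (hθ : 0 < θ) (hθφ : θ ≤ φ') (hφ1 : φ' ≤ 1) :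
    -M ≤ critExp L f Z ψ δ θ ∧ critExp L f Z ψ δ θ ≤ critExp L f Z ψ δ φ' ∧
      critExp L f Z ψ δ φ' ≤ (φ' / θ) * (critExp L f Z ψ δ θ + M) - M + ε := by
  have hM0 : 0 ≤ M := (abs_nonneg _).trans (hM hZ.some)
  have hnull_ge : ∀ α, L (fun N => MBall f Z α ψ δ N θ) = 0 → -M ≤ α := by
    intro α hα
    by_contra! hlt
    exact hL_one (le_zero_iff.1 (hα ▸ hL_mono fun _ => one_le_MBall hM hδ hZ hlt.le))
  refine sInf_chain_of_affine_mapsTo hM0 ((one_le_div hθ).2 hθφ) hε0 ?_ hnull_ge ?_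
  · intro α hα
    exact le_zero_iff.1 (hα ▸ hL_mono fun _ => MBall_le_MBall_of_le hθ hθφ)
  · intro α hα
    refine le_zero_iff.1 ((hL_mono fun _ =>
      MBall_le_exp_mul_MBall hM hδ hε hθ hθφ hφ1 (hnull_ge α hα)).trans ?_)
    rw [hL_mul _ ENNReal.ofReal_ne_top, show L _ = 0 from hα, mul_zero]

lemma limsup_critExp_chain [CompactSpace X] (hL_mono : Monotone L)
    (hL_one : L (fun _ => 1) ≠ 0) (hL_mul : ∀ K ≠ ∞, ∀ u, L (fun n => K * u n) = K * L u)
    (hZ : Z.Nonempty) (hψ : Continuous ψ) (hM : ∀ x, |ψ x| ≤ M)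
    (hθ : 0 < θ) (hθφ : θ ≤ φ') (hφ1 : φ' ≤ 1) :
    limsup (fun δ => critExp L f Z ψ δ θ) (𝓝[>] 0) ≤
        limsup (fun δ => critExp L f Z ψ δ φ') (𝓝[>] 0) ∧
      limsup (fun δ => critExp L f Z ψ δ φ') (𝓝[>] 0) ≤
        (φ' / θ) * limsup (fun δ => critExp L f Z ψ δ θ) (𝓝[>] 0) + (φ' / θ - 1) * M := by
  have hchain : ∀ ε > 0, ∀ᶠ δ in 𝓝[>] (0 : ℝ),
      -M ≤ critExp L f Z ψ δ θ ∧ critExp L f Z ψ δ θ ≤ critExp L f Z ψ δ φ' ∧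
        critExp L f Z ψ δ φ' ≤ (φ' / θ) * (critExp L f Z ψ δ θ + M) - M + ε := by
    intro ε hε
    filter_upwards [self_mem_nhdsWithin, eventually_abs_sub_le_of_dist_lt hψ hε] with δ hδ hεδ
    exact critExp_chain hL_mono hL_one hL_mul hZ hM hδ hεδ hε.le hθ hθφ hφ1
  exact limsup_chain_of_eventually ((abs_nonneg _).trans (hM hZ.some)) ((one_le_div hθ).2 hθφ)
    ((hchain 1 one_pos).mono fun _ h => h.1) ((hchain 1 one_pos).mono fun _ h => h.2.1)
    fun ε hε => (hchain ε hε).mono fun _ h => h.2.2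

end CritExp

theorem pressure_theta_comparison_general {X : Type*} [MetricSpace X] [CompactSpace X]
    (f : ℕ → X → X)
    (Z : Set X) (hZ : Z.Nonempty) (φ : C(X, ℝ)) (θ φ' : ℝ)
    (hθ0 : 0 < θ) (hθφ : θ < φ') (hφ'1 : φ' ≤ 1) :
    (upperP f Z (⇑φ) θ ≤ upperP f Z (⇑φ) φ' ∧
      upperP f Z (⇑φ) φ' ≤ (φ' / θ) * upperP f Z (⇑φ) θ + (φ' / θ - 1) * ‖φ‖) ∧
    (lowerP f Z (⇑φ) θ ≤ lowerP f Z (⇑φ) φ' ∧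
      lowerP f Z (⇑φ) φ' ≤ (φ' / θ) * lowerP f Z (⇑φ) θ + (φ' / θ - 1) * ‖φ‖) ∧
    (upperP f Z (fun _ => 0) θ ≤ upperP f Z (fun _ => 0) φ' ∧
      upperP f Z (fun _ => 0) φ' ≤ (φ' / θ) * upperP f Z (fun _ => 0) θ) := by
  have upper : ∀ (ψ : X → ℝ) (M : ℝ), Continuous ψ → (∀ x, |ψ x| ≤ M) →
      upperP f Z ψ θ ≤ upperP f Z ψ φ' ∧
        upperP f Z ψ φ' ≤ (φ' / θ) * upperP f Z ψ θ + (φ' / θ - 1) * M :=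
    fun ψ M hψ hM => limsup_critExp_chain (L := fun u => limsup u atTop)
      (fun _ _ huv => limsup_le_limsup (.of_forall huv)) (by simp)
      (fun _ hK _ => ENNReal.limsup_const_mul_of_ne_top hK) hZ hψ hM hθ0 hθφ.le hφ'1
  have hφ : ∀ x, |φ x| ≤ ‖φ‖ := fun x => by simpa using φ.norm_coe_le_norm x
  have lower := limsup_critExp_chain (L := fun u => liminf u atTop) (f := f)
    (fun _ _ huv => liminf_le_liminf (.of_forall huv)) (by simp)
    (fun _ hK _ => ENNReal.liminf_const_mul_of_ne_top hK) hZ φ.continuous hφ hθ0 hθφ.le hφ'1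
  have entropy := upper (fun _ => 0) 0 continuous_const (by simp)
  exact ⟨upper φ ‖φ‖ φ.continuous hφ, lower, entropy.1, by simpa using entropy.2⟩

/-- for `0 < θ < φ' ≤ 1`,
`P(f,Z,φ,θ) ≤ P(f,Z,φ,φ') ≤ (φ'/θ)P(f,Z,φ,θ) + (φ'/θ − 1)‖φ‖`, for both pressures;
in particular the corresponding chain for the intermediate entropies (φ = 0). -/
theorem pressure_theta_comparison {X : Type*} [MetricSpace X] [CompactSpace X]
    (f : ℕ → X → X) (hf : ∀ i, Continuous (f i))
    (Z : Set X) (hZ : Z.Nonempty) (φ : C(X, ℝ)) (θ φ' : ℝ)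
    (hθ0 : 0 < θ) (hθφ : θ < φ') (hφ'1 : φ' ≤ 1) :
    (upperP f Z (⇑φ) θ ≤ upperP f Z (⇑φ) φ' ∧
      upperP f Z (⇑φ) φ' ≤ (φ' / θ) * upperP f Z (⇑φ) θ + (φ' / θ - 1) * ‖φ‖) ∧
    (lowerP f Z (⇑φ) θ ≤ lowerP f Z (⇑φ) φ' ∧
      lowerP f Z (⇑φ) φ' ≤ (φ' / θ) * lowerP f Z (⇑φ) θ + (φ' / θ - 1) * ‖φ‖) ∧
    (upperP f Z (fun _ => 0) θ ≤ upperP f Z (fun _ => 0) φ' ∧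
      upperP f Z (fun _ => 0) φ' ≤ (φ' / θ) * upperP f Z (fun _ => 0) θ) :=
  pressure_theta_comparison_general f Z hZ φ θ φ' hθ0 hθφ hφ'1

end NDSPressure
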